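/- For each real r ≥ 1, the quadratic polynomial q_r(u) = u² + ((r + 1/r)/2)·u − 592/5625 has two real roots; one root is ≤ −1 and the other root c(r) lies in the open interval (0, 1). Moreover the function r ↦ c(r) is strictly decreasing on (1, ∞), and c(1.4) > cos(1.48). -/
import Mathlib


/-- The quadratic polynomial `q_r(u) = u² + ((r + 1/r)/2)·u − 592/5625`. -/
noncomputable def q (r u : ℝ) : ℝ := u ^ 2 + ((r + 1 / r) / 2) * u - 592 / 5625

/-- Half the sum `r + 1/r`. -/
noncomputable def bb (r : ℝ) : ℝ := (r + 1 / r) / 2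

/-- The positive root of `q_r`. -/
noncomputable def cc (r : ℝ) : ℝ := (Real.sqrt ((bb r) ^ 2 + 2368 / 5625) - bb r) / 2

lemma sq_s (r : ℝ) : (Real.sqrt ((bb r) ^ 2 + 2368 / 5625)) ^ 2 = (bb r) ^ 2 + 2368 / 5625 :=
  Real.sq_sqrt (by positivity)

lemma s_nonneg (r : ℝ) : 0 ≤ Real.sqrt ((bb r) ^ 2 + 2368 / 5625) := Real.sqrt_nonneg _

lemma bb_ge_one {r : ℝ} (hr : 1 ≤ r) : 1 ≤ bb r := by
  have hr0 : 0 < r := lt_of_lt_of_le one_pos hr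
  have h1 : r * (1 / r) = 1 := by field_simp
  unfold bb
  nlinarith [sq_nonneg (r - 1)]

lemma s_gt_b {r : ℝ} (hr : 1 ≤ r) : bb r < Real.sqrt ((bb r) ^ 2 + 2368 / 5625) := by
  have hb := bb_ge_one hr
  by_contra h
  push_neg at h
  nlinarith [sq_s r, s_nonneg r]

lemma s_lt_b_add_one {r : ℝ} (hr : 1 ≤ r) :
    Real.sqrt ((bb r) ^ 2 + 2368 / 5625) < bb r + 1 := by
  have hb := bb_ge_one hr
  by_contra h
  push_neg at h
  nlinarith [sq_s r, s_nonneg r]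

lemma bb_strictMono {r s : ℝ} (hr : 1 < r) (hrs : r < s) : bb r < bb s := by
  have hr0 : 0 < r := lt_trans one_pos hr
  have hs0 : 0 < s := lt_trans hr0 hrs
  have h1 : r * (1 / r) = 1 := by field_simp
  have h2 : s * (1 / s) = 1 := by field_simp
  unfold bb
  have key : (s + 1 / s - (r + 1 / r)) * (r * s) = (s - r) * (r * s - 1) := by
    field_simp; ring
  have hpos : (0:ℝ) < (s - r) * (r * s - 1) := by
    apply mul_pos (sub_pos.mpr hrs); nlinarith
  have hrs0 : (0:ℝ) < r * s := mul_pos hr0 hs0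
  nlinarith [mul_pos hpos hrs0]

/-- For each `r ≥ 1`, `q_r` has two real roots: one `≤ −1` and the other, `c r`, in `(0,1)`;
moreover `c` is strictly decreasing on `(1, ∞)` and `c 1.4 > cos 1.48`. -/
theorem quadratic_roots_properties :
    ∃ c : ℝ → ℝ,
      (∀ r : ℝ, 1 ≤ r → ∃ u₁ : ℝ, u₁ ≤ -1 ∧ q r u₁ = 0 ∧
        c r ∈ Set.Ioo (0 : ℝ) 1 ∧ q r (c r) = 0 ∧ u₁ ≠ c r) ∧
      StrictAntiOn c (Set.Ioi 1) ∧
      Real.cos 1.48 < c 1.4 := by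
  refine ⟨cc, ?_, ?_, ?_⟩
  · intro r hr
    set s := Real.sqrt ((bb r) ^ 2 + 2368 / 5625) with hs
    have hsq := sq_s r
    have hsn := s_nonneg r
    have hb := bb_ge_one hr
    have hgt := s_gt_b hr
    have hlt := s_lt_b_add_one hr
    refine ⟨(-(bb r) - s) / 2, by nlinarith, ?_, ⟨by simp only [cc]; nlinarith,
      by simp only [cc]; nlinarith⟩, ?_, by simp only [cc]; intro h; nlinarith⟩
    · show ((-(bb r) - s) / 2) ^ 2 + bb r * ((-(bb r) - s) / 2) - 592 / 5625 = 0
      nlinarith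
    · show (cc r) ^ 2 + bb r * cc r - 592 / 5625 = 0
      simp only [cc]
      nlinarith
  · intro r hr t ht hrt
    simp only [Set.mem_Ioi] at hr ht
    have hb : bb r < bb t := bb_strictMono hr hrt
    have hb1 : 1 ≤ bb r := bb_ge_one hr.le
    have h1 := sq_s r
    have h2 := sq_s t
    have hg1 := s_gt_b hr.le
    have hg2 := s_gt_b ht.le
    have hle : Real.sqrt ((bb r) ^ 2 + 2368 / 5625) ≤
        Real.sqrt ((bb t) ^ 2 + 2368 / 5625) :=
      Real.sqrt_le_sqrt (by nlinarith)
    simp only [cc]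
    nlinarith [mul_pos (sub_pos.mpr hb)
      (show (0:ℝ) < Real.sqrt ((bb r) ^ 2 + 2368 / 5625) +
        Real.sqrt ((bb t) ^ 2 + 2368 / 5625) by nlinarith)]
  · have hpi1 : Real.pi < 3.141593 := Real.pi_lt_d6
    have hpi2 : 3.141592 < Real.pi := Real.pi_gt_d6
    have hcos : Real.cos 1.48 < Real.pi / 2 - 1.48 := by
      have h := Real.sin_lt (x := Real.pi / 2 - 1.48) (by nlinarith)
      rwa [Real.sin_pi_div_two_sub] at h
    have hb : bb 1.4 = 37 / 35 := by unfold bb; norm_num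
    have harg : (bb 1.4) ^ 2 + 2368 / 5625 = 424057 / 275625 := by rw [hb]; norm_num
    have hs : (1.2388 : ℝ) < Real.sqrt (424057 / 275625) := by
      rw [Real.lt_sqrt (by norm_num)]; norm_num
    simp only [cc, harg, hb]
    nlinarith
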